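/- arXiv:1512.03795 — 4 statements merged into one kernel-verified Lean document; each statement's English description precedes it below -/
import Mathlib

section
/- Let a : ℕ → [0,∞) satisfy ⌊n/m⌋² · a(m) ≤ a(n) for all natural numbers 1 ≤ m ≤ n, and suppose there is C > 0 with a(n) ≤ C·n² for all n ≥ 1. Then the sequence n ↦ a(n)/n² converges as n → ∞, and its limit equals sup_{m ≥ 1} a(m)/m². -/
/-!
Write `f n = a n / n²`. Every `f m` with `m ≥ 1` is at most the supremum `L`, and the
hypothesis says `f n ≥ (⌊n/m⌋ m / n)² f m`, where the factor tends to `1` as `n → ∞`.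
Hence `liminf f ≥ f m` for every `m`, so `liminf f ≥ L ≥ limsup f`.
-/

open Filter Topology

theorem tendsto_csSup_of_eventually_le_of_forall_mem_tendsto
    {ι α : Type*} [ConditionallyCompleteLinearOrder α] [TopologicalSpace α] [OrderTopology α]
    {l : Filter ι} {f : ι → α} {S : Set α} (hne : S.Nonempty)
    (hle : ∀ᶠ i in l, f i ≤ sSup S)
    (hge : ∀ x ∈ S, ∃ g : ι → α, Tendsto g l (𝓝 x) ∧ ∀ᶠ i in l, g i ≤ f i) :
    Tendsto f l (𝓝 (sSup S)) := by
  refine tendsto_order.2 ⟨fun y hy => ?_, fun y hy => hle.mono fun i hi => hi.trans_lt hy⟩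
  obtain ⟨x, hxS, hyx⟩ := exists_lt_of_lt_csSup hne hy
  obtain ⟨g, hg, hgf⟩ := hge x hxS
  filter_upwards [hg.eventually (eventually_gt_nhds hyx), hgf] with i hgi hgfi
  exact hgi.trans_le hgfi

theorem tendsto_natDiv_mul_div_atTop {m : ℕ} (hm : 0 < m) :
    Tendsto (fun n : ℕ => ((n / m : ℕ) * m : ℝ) / n) atTop (𝓝 1) := by
  have hm' : (0 : ℝ) < m := by exact_mod_cast hm
  refine (tendsto_nat_floor_div_atTop.comp
    (tendsto_natCast_atTop_atTop.atTop_div_const hm')).congr fun n => ?_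
  simp only [Function.comp_apply, Nat.floor_div_eq_div]
  field_simp

theorem natDiv_mul_div_sq_mul_div_sq_le {a : ℕ → ℝ} {m n : ℕ} (hm : 1 ≤ m) (hmn : m ≤ n)
    (hsub : ((n / m : ℕ) : ℝ) ^ 2 * a m ≤ a n) :
    (((n / m : ℕ) * m : ℝ) / n) ^ 2 * (a m / (m : ℝ) ^ 2) ≤ a n / (n : ℝ) ^ 2 := by
  have hm0 : (m : ℝ) ≠ 0 := by positivity
  have hn0 : (0 : ℝ) < (n : ℝ) ^ 2 := by
    have : (0 : ℝ) < n := by exact_mod_cast hm.trans hmn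
    positivity
  calc (((n / m : ℕ) * m : ℝ) / n) ^ 2 * (a m / (m : ℝ) ^ 2)
      = ((n / m : ℕ) : ℝ) ^ 2 * a m / (n : ℝ) ^ 2 := by field_simp
    _ ≤ a n / (n : ℝ) ^ 2 := div_le_div_of_nonneg_right hsub hn0.le

theorem subadditive_limit_general (a : ℕ → ℝ)
    (hsub : ∀ m n : ℕ, 1 ≤ m → m ≤ n → ((n / m : ℕ) : ℝ)^2 * a m ≤ a n)
    (hbd : ∃ C : ℝ, 0 < C ∧ ∀ n : ℕ, 1 ≤ n → a n ≤ C * (n : ℝ)^2) :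
    Tendsto (fun n : ℕ => a n / (n : ℝ)^2) atTop
      (nhds (sSup {x : ℝ | ∃ m : ℕ, 1 ≤ m ∧ x = a m / (m : ℝ)^2})) := by
  obtain ⟨C, -, hC⟩ := hbd
  set S : Set ℝ := {x : ℝ | ∃ m : ℕ, 1 ≤ m ∧ x = a m / (m : ℝ)^2}
  have hbdd : BddAbove S := by
    refine ⟨C, ?_⟩
    rintro _ ⟨m, hm, rfl⟩
    rw [div_le_iff₀ (by positivity)]
    exact hC m hm
  refine tendsto_csSup_of_eventually_le_of_forall_mem_tendsto ⟨_, 1, le_rfl, rfl⟩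
    ((eventually_ge_atTop 1).mono fun n hn => le_csSup hbdd ⟨n, hn, rfl⟩) ?_
  rintro _ ⟨m, hm, rfl⟩
  refine ⟨fun n => (((n / m : ℕ) * m : ℝ) / n) ^ 2 * (a m / (m : ℝ) ^ 2), ?_, ?_⟩
  · simpa using ((tendsto_natDiv_mul_div_atTop hm).pow 2).mul_const (a m / (m : ℝ) ^ 2)
  · filter_upwards [eventually_ge_atTop m] with n hmn
    exact natDiv_mul_div_sq_mul_div_sq_le hm hmn (hsub m n hm hmn)

/-- if `a : ℕ → [0,∞)` satisfies `⌊n/m⌋² a(m) ≤ a(n)` for `1 ≤ m ≤ n` and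
`a(n) ≤ C n²` for `n ≥ 1`, then `a(n)/n²` converges, and its limit is `sup_{m ≥ 1} a(m)/m²`. -/
theorem subadditive_limit (a : ℕ → ℝ) (ha0 : ∀ n, 0 ≤ a n)
    (hsub : ∀ m n : ℕ, 1 ≤ m → m ≤ n → ((n / m : ℕ) : ℝ)^2 * a m ≤ a n)
    (hbd : ∃ C : ℝ, 0 < C ∧ ∀ n : ℕ, 1 ≤ n → a n ≤ C * (n : ℝ)^2) :
    Tendsto (fun n : ℕ => a n / (n : ℝ)^2) atTop
      (nhds (sSup {x : ℝ | ∃ m : ℕ, 1 ≤ m ∧ x = a m / (m : ℝ)^2})) :=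
  subadditive_limit_general a hsub hbd
end

section
/- Let δ > 0, λ > 0, p ≥ 1 and A ∈ ℝ^{3×3}. With C¹_δ and C²_δ the open pyramids with common base square (−δ/2,δ/2)² × {0} and apexes (0,0,δ/2) and (0,0,δ) respectively, ℝ³₊ = {x ∈ ℝ³ : x₃ > 0}, and m_{δ,p,A} := inf { ∫_{C²_δ ∩ ℝ³₊} ‖Dv(x)‖^p dx : v : ℝ³₊ → ℝ³ locally Lipschitz, v = 0 on C¹_δ ∩ ℝ³₊, v(x) = Ax on ℝ³₊ ∖ C²_δ }, one has the scaling identity m_{δ,p,λA} = δ³ λ^p m_{1,p,A} (as an identity in [0,∞]). -/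
open MeasureTheory Filter Set Matrix
open scoped ENNReal NNReal

noncomputable section

/-- 3×3 real matrices. -/
abbrev Mat3 := Matrix (Fin 3) (Fin 3) ℝ

/-- Euclidean 3-space. -/
abbrev E3 := EuclideanSpace ℝ (Fin 3)

/-- The matrix of a continuous linear map `E3 →L[ℝ] E3` in the standard basis. -/
def matOf (f : E3 →L[ℝ] E3) : Mat3 := fun i j => f (EuclideanSpace.single j 1) i

/-- Frobenius norm of a 3×3 matrix. -/
def frob (M : Mat3) : ℝ := Real.sqrt (∑ i, ∑ j, (M i j)^2)

/-- The special orthogonal group SO(3), as a set of matrices. -/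
def SO3 : Set Mat3 := {Q | Q * Q.transpose = 1 ∧ Q.det = 1}

/-- Frobenius distance from `F` to the well `α·SO(3)`. -/
def distSO (α : ℝ) (F : Mat3) : ℝ := sInf {d : ℝ | ∃ Q ∈ SO3, d = frob (F - α • Q)}

/-- Matrix-vector multiplication, as a map on Euclidean space. -/
def mulVecE (A : Mat3) (x : E3) : E3 := WithLp.toLp 2 (A.mulVec x)

/-- `v` is locally Lipschitz on the (open) set `s`. -/
def LocLipOn (s : Set E3) (v : E3 → E3) : Prop :=
  ∀ x ∈ s, ∃ K : ℝ≥0, ∃ t ∈ nhds x, t ⊆ s ∧ LipschitzOnWith K v t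

/-- The open upper half-space `ℝ³₊ = {x₃ > 0}`. -/
def H3 : Set E3 := {x | 0 < x 2}

/-- The open pyramid `C¹_δ` with base square `(−δ/2,δ/2)² × {0}` and apex `(0,0,δ/2)`. -/
def Pyr1 (δ : ℝ) : Set E3 :=
  {x | 0 < x 2 ∧ x 2 < δ/2 ∧ |x 0| < δ/2 - x 2 ∧ |x 1| < δ/2 - x 2}

/-- The open pyramid `C²_δ` with base square `(−δ/2,δ/2)² × {0}` and apex `(0,0,δ)`. -/
def Pyr2 (δ : ℝ) : Set E3 :=
  {x | 0 < x 2 ∧ x 2 < δ ∧ |x 0| < (δ - x 2)/2 ∧ |x 1| < (δ - x 2)/2}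

/-- Admissible maps for the double-pyramid problem: locally Lipschitz on `ℝ³₊`,
vanishing on `C¹_δ ∩ ℝ³₊`, and equal to `x ↦ Ax` on `ℝ³₊ ∖ C²_δ`. -/
def PyrAdm (δ : ℝ) (A : Mat3) (v : E3 → E3) : Prop :=
  LocLipOn H3 v ∧ (∀ x ∈ Pyr1 δ ∩ H3, v x = 0) ∧ (∀ x ∈ H3 \ Pyr2 δ, v x = mulVecE A x)

/-- The double-pyramid minimum value `m_{δ,p,A}`, as an element of `[0,∞]`. -/
def mPyr (δ p : ℝ) (A : Mat3) : ℝ≥0∞ :=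
  sInf {e : ℝ≥0∞ | ∃ v : E3 → E3, PyrAdm δ A v ∧
    e = ∫⁻ x in Pyr2 δ ∩ H3, ENNReal.ofReal (frob (matOf (fderiv ℝ v x)) ^ p)}


/-! The map `v ↦ s μ v(·/s)` sends admissible maps for `(δ, A)` to admissible maps for
`(s δ, μ A)`, and the same construction with `s⁻¹, μ⁻¹` undoes it. It multiplies the derivative
by `μ` and, by the change of variables `x ↦ x/s`, the volume by `s³`; hence it multiplies every
energy, and therefore the infimum, by `s³ μ^p`. -/

open scoped Pointwise

lemma fderiv_rescale {𝕜 E F : Type*} [NontriviallyNormedField 𝕜] [NormedAddCommGroup E]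
    [NormedSpace 𝕜 E] [NormedAddCommGroup F] [NormedSpace 𝕜 F] {s : 𝕜} (hs : s ≠ 0) (μ : 𝕜)
    (v : E → F) (x : E) :
    fderiv 𝕜 (fun y => (s * μ) • v (s⁻¹ • y)) x = μ • fderiv 𝕜 v (s⁻¹ • x) := by
  change fderiv 𝕜 ((s * μ) • fun y => v (s⁻¹ • y)) x = _
  rw [fderiv_const_smul_field, Pi.smul_apply, fderiv_comp_smul, smul_smul, mul_right_comm,
    mul_inv_cancel₀ hs, one_mul]

lemma setLIntegral_comp_inv_smul {E : Type*} [NormedAddCommGroup E] [NormedSpace ℝ E]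
    [MeasurableSpace E] [BorelSpace E] [FiniteDimensional ℝ E] (μ : Measure E)
    [μ.IsAddHaarMeasure] (f : E → ℝ≥0∞) (S : Set E) {r : ℝ} (hr : 0 < r) :
    ∫⁻ x in r • S, f (r⁻¹ • x) ∂μ =
      ENNReal.ofReal (r ^ Module.finrank ℝ E) * ∫⁻ x in S, f x ∂μ := by
  have he : MeasurableEmbedding (r⁻¹ • · : E → E) :=
    (Homeomorph.smulOfNeZero r⁻¹ (inv_ne_zero hr.ne')).measurableEmbedding
  rw [← preimage_smul_inv₀ hr.ne', ← he.lintegral_map, ← he.restrict_map,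
    Measure.map_addHaar_smul μ (inv_ne_zero hr.ne'), Measure.restrict_smul,
    lintegral_smul_measure, inv_pow, inv_inv, abs_of_pos (pow_pos hr _), smul_eq_mul]

lemma frob_smul (c : ℝ) (M : Mat3) : frob (c • M) = |c| * frob M := by
  rw [frob, frob, ← Real.sqrt_sq_eq_abs, ← Real.sqrt_mul (sq_nonneg c)]
  simp only [Matrix.smul_apply, smul_eq_mul, mul_pow, Finset.mul_sum]

lemma matOf_smul (c : ℝ) (f : E3 →L[ℝ] E3) : matOf (c • f) = c • matOf f := rfl

lemma smul_H3 {s : ℝ} (hs : 0 < s) : s • H3 = H3 := by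
  ext x
  simp only [mem_smul_set_iff_inv_smul_mem₀ hs.ne', H3, mem_ofPred_eq, PiLp.smul_apply,
    smul_eq_mul, inv_pos.2 hs, mul_pos_iff_of_pos_left]

lemma Pyr1_mul_eq_smul {s : ℝ} (hs : 0 < s) (δ : ℝ) : Pyr1 (s * δ) = s • Pyr1 δ := by
  ext x
  obtain ⟨y, rfl⟩ : ∃ y, x = s • y := ⟨s⁻¹ • x, (smul_inv_smul₀ hs.ne' x).symm⟩
  simp only [smul_mem_smul_set_iff₀ hs.ne', Pyr1, mem_ofPred_eq, PiLp.smul_apply,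
    smul_eq_mul, abs_mul, abs_of_pos hs, mul_div_assoc, ← mul_sub, mul_pos_iff_of_pos_left hs,
    mul_lt_mul_iff_right₀ hs]

lemma Pyr2_mul_eq_smul {s : ℝ} (hs : 0 < s) (δ : ℝ) : Pyr2 (s * δ) = s • Pyr2 δ := by
  ext x
  obtain ⟨y, rfl⟩ : ∃ y, x = s • y := ⟨s⁻¹ • x, (smul_inv_smul₀ hs.ne' x).symm⟩
  simp only [smul_mem_smul_set_iff₀ hs.ne', Pyr2, mem_ofPred_eq, PiLp.smul_apply,
    smul_eq_mul, abs_mul, abs_of_pos hs, ← mul_sub, mul_div_assoc, mul_pos_iff_of_pos_left hs,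
    mul_lt_mul_iff_right₀ hs]

lemma mulVecE_smul_inv_smul {s : ℝ} (hs : s ≠ 0) (μ : ℝ) (A : Mat3) (x : E3) :
    (s * μ) • mulVecE A (s⁻¹ • x) = mulVecE (μ • A) x := by
  ext i
  simp only [mulVecE, PiLp.smul_apply, PiLp.toLp_apply, WithLp.ofLp_smul, Matrix.mulVec_smul,
    Matrix.smul_mulVec, Pi.smul_apply, smul_eq_mul]
  field_simp

lemma LocLipOn.rescale {S : Set E3} {v : E3 → E3} (hv : LocLipOn S v) {s : ℝ} (hs : s ≠ 0)
    (c : ℝ) : LocLipOn (s • S) (fun x => c • v (s⁻¹ • x)) := by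
  intro x hx
  obtain ⟨K, t, ht, htS, hvt⟩ := hv (s⁻¹ • x) ((mem_smul_set_iff_inv_smul_mem₀ hs S x).1 hx)
  refine ⟨‖c‖₊ * (K * ‖s⁻¹‖₊), s • t, ?_, smul_set_mono htS, ?_⟩
  · rw [← preimage_smul_inv₀ hs]
    exact (continuous_const_smul s⁻¹).continuousAt.preimage_mem_nhds ht
  · refine (lipschitzWith_smul c).comp_lipschitzOnWith
      (hvt.comp (lipschitzWith_smul s⁻¹).lipschitzOnWith fun y hy => ?_)
    exact (mem_smul_set_iff_inv_smul_mem₀ hs t y).1 hy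

lemma PyrAdm.rescale {δ : ℝ} {A : Mat3} {v : E3 → E3} (hv : PyrAdm δ A v) {s : ℝ}
    (hs : 0 < s) (μ : ℝ) : PyrAdm (s * δ) (μ • A) (fun x => (s * μ) • v (s⁻¹ • x)) := by
  obtain ⟨hlip, hzero, hlin⟩ := hv
  refine ⟨smul_H3 hs ▸ hlip.rescale hs.ne' _, fun x hx => ?_, fun x hx => ?_⟩
  · rw [Pyr1_mul_eq_smul hs, ← smul_H3 hs, ← smul_set_inter₀ hs.ne',
      mem_smul_set_iff_inv_smul_mem₀ hs.ne'] at hx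
    dsimp only
    rw [hzero _ hx, smul_zero]
  · rw [Pyr2_mul_eq_smul hs, ← smul_H3 hs, ← smul_set_sdiff₀ hs.ne',
      mem_smul_set_iff_inv_smul_mem₀ hs.ne'] at hx
    dsimp only
    rw [hlin _ hx, mulVecE_smul_inv_smul hs.ne']

def pyrEnergy (δ p : ℝ) (v : E3 → E3) : ℝ≥0∞ :=
  ∫⁻ x in Pyr2 δ ∩ H3, ENNReal.ofReal (frob (matOf (fderiv ℝ v x)) ^ p)

lemma mPyr_eq_iInf (δ p : ℝ) (A : Mat3) :
    mPyr δ p A = ⨅ (v) (_ : PyrAdm δ A v), pyrEnergy δ p v :=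
  le_antisymm (le_iInf₂ fun v hv => sInf_le ⟨v, hv, rfl⟩)
    (le_sInf fun _ ⟨v, hv, he⟩ => he ▸ iInf₂_le v hv)

lemma pyrEnergy_rescale {s μ : ℝ} (hs : 0 < s) (hμ : 0 < μ) (δ p : ℝ) (v : E3 → E3) :
    pyrEnergy (s * δ) p (fun x => (s * μ) • v (s⁻¹ • x)) =
      ENNReal.ofReal (s ^ 3 * μ ^ p) * pyrEnergy δ p v := by
  set g : E3 → ℝ≥0∞ := fun x => ENNReal.ofReal (frob (matOf (fderiv ℝ v x)) ^ p)
  have hpointwise (x : E3) :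
      ENNReal.ofReal (frob (matOf (fderiv ℝ (fun y => (s * μ) • v (s⁻¹ • y)) x)) ^ p) =
        ENNReal.ofReal (μ ^ p) * g (s⁻¹ • x) := by
    rw [fderiv_rescale hs.ne', matOf_smul, frob_smul, abs_of_pos hμ,
      Real.mul_rpow (y := frob _) hμ.le (Real.sqrt_nonneg _), ENNReal.ofReal_mul (by positivity)]
  rw [pyrEnergy, Pyr2_mul_eq_smul hs, ← smul_H3 hs, ← smul_set_inter₀ hs.ne',
    lintegral_congr hpointwise, lintegral_const_mul' _ _ ENNReal.ofReal_ne_top,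
    setLIntegral_comp_inv_smul volume _ _ hs, finrank_euclideanSpace_fin, ← mul_assoc,
    ← ENNReal.ofReal_mul (by positivity), mul_comm (μ ^ p), pyrEnergy]

lemma mPyr_mul_smul_le {s μ : ℝ} (hs : 0 < s) (hμ : 0 < μ) (δ p : ℝ) (A : Mat3) :
    mPyr (s * δ) p (μ • A) ≤ ENNReal.ofReal (s ^ 3 * μ ^ p) * mPyr δ p A := by
  have hc : ENNReal.ofReal (s ^ 3 * μ ^ p) ≠ 0 := (ENNReal.ofReal_pos.2 (by positivity)).ne'
  rw [mPyr_eq_iInf, mPyr_eq_iInf, ENNReal.mul_iInf_of_ne hc ENNReal.ofReal_ne_top]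
  refine le_iInf fun v => ?_
  rw [ENNReal.mul_iInf_of_ne hc ENNReal.ofReal_ne_top]
  refine le_iInf fun hv => ?_
  rw [← pyrEnergy_rescale hs hμ]
  exact iInf₂_le _ (hv.rescale hs μ)

lemma mPyr_mul_smul {s μ : ℝ} (hs : 0 < s) (hμ : 0 < μ) (δ p : ℝ) (A : Mat3) :
    mPyr (s * δ) p (μ • A) = ENNReal.ofReal (s ^ 3 * μ ^ p) * mPyr δ p A := by
  have hc : ENNReal.ofReal (s ^ 3 * μ ^ p) ≠ 0 := (ENNReal.ofReal_pos.2 (by positivity)).ne'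
  have hinv : ENNReal.ofReal (s⁻¹ ^ 3 * μ⁻¹ ^ p) = (ENNReal.ofReal (s ^ 3 * μ ^ p))⁻¹ := by
    rw [← ENNReal.ofReal_inv_of_pos (by positivity), mul_inv, inv_pow, Real.inv_rpow hμ.le]
  have hback := mPyr_mul_smul_le (inv_pos.2 hs) (inv_pos.2 hμ) (s * δ) p (μ • A)
  rw [inv_mul_cancel_left₀ hs.ne', smul_smul, inv_mul_cancel₀ hμ.ne', one_smul, hinv] at hback
  exact le_antisymm (mPyr_mul_smul_le hs hμ δ p A)
    ((ENNReal.mul_le_iff_le_inv hc ENNReal.ofReal_ne_top).2 hback)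

theorem pyramid_scaling_general (δ lam p : ℝ) (hδ : 0 < δ) (hlam : 0 < lam) (A : Mat3) :
    mPyr δ p (lam • A) = ENNReal.ofReal (δ^3 * lam ^ p) * mPyr 1 p A := by
  simpa only [mul_one] using mPyr_mul_smul hδ hlam 1 p A

/-- the scaling identity `m_{δ,p,λA} = δ³ λ^p m_{1,p,A}` in `[0,∞]`. -/
theorem pyramid_scaling (δ lam p : ℝ) (hδ : 0 < δ) (hlam : 0 < lam) (hp : 1 ≤ p) (A : Mat3) :
    mPyr δ p (lam • A) = ENNReal.ofReal (δ^3 * lam ^ p) * mPyr 1 p A :=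
  pyramid_scaling_general δ lam p hδ hlam A
end
end

section
/- Let 1 < p < 2 and A ∈ ℝ^{3×3}. With C¹_1 and C²_1 the open pyramids with common base square (−1/2,1/2)² × {0} and apexes (0,0,1/2) and (0,0,1) respectively, and ℝ³₊ = {x ∈ ℝ³ : x₃ > 0}, there exists a map v : ℝ³₊ → ℝ³ that is locally Lipschitz on ℝ³₊, satisfies v = 0 on C¹_1 ∩ ℝ³₊ and v(x) = Ax on ℝ³₊ ∖ C²_1, and has finite energy ∫_{C²_1 ∩ ℝ³₊} ‖Dv(x)‖^p dx < ∞. -/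
open MeasureTheory Filter Set Matrix
open scoped ENNReal NNReal

noncomputable section

/-!
The competitor is `x ↦ φ x • A x`, where at each height `x₂` the cutoff `φ` interpolates
linearly in `max |x₀| |x₁|` between `0` on the lateral faces of `C¹_1` and `1` on those of
`C²_1`. These faces are `x₂ / 2` apart horizontally, so the map is locally Lipschitz on `ℝ³₊`,
its derivative vanishes inside `C¹_1` and is `O(1 / x₂)` on the transition layer. The part of the
layer below height `t` has volume `O(t²)`; summing over dyadic heights `x₂ ∼ 2⁻ᵏ` gives
`∑ 2ᵏᵖ 4⁻ᵏ < ∞`, which is where `p < 2` enters.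
-/
theorem LipschitzOnWith.smul_of_norm_le {X 𝕜 E : Type*} [PseudoMetricSpace X] [NormedField 𝕜]
    [SeminormedAddCommGroup E] [NormedSpace 𝕜 E] {s : Set X} {f : X → 𝕜} {g : X → E}
    {Kf Kg Mf Mg : ℝ≥0} (hf : LipschitzOnWith Kf f s) (hg : LipschitzOnWith Kg g s)
    (hfM : ∀ x ∈ s, ‖f x‖ ≤ Mf) (hgM : ∀ x ∈ s, ‖g x‖ ≤ Mg) :
    LipschitzOnWith (Kf * Mg + Mf * Kg) (fun x => f x • g x) s := by
  refine LipschitzOnWith.of_dist_le_mul fun x hx y hy => ?_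
  have hsplit : f x • g x - f y • g y = (f x - f y) • g x + f y • (g x - g y) := by
    simp only [sub_smul, smul_sub]; abel
  have hfxy := hf.dist_le_mul x hx y hy
  have hgxy := hg.dist_le_mul x hx y hy
  rw [dist_eq_norm] at hfxy hgxy
  calc dist (f x • g x) (f y • g y) ≤ ‖f x - f y‖ * ‖g x‖ + ‖f y‖ * ‖g x - g y‖ := by
        rw [dist_eq_norm, hsplit, ← norm_smul, ← norm_smul]; exact norm_add_le _ _
    _ ≤ (Kf * dist x y) * Mg + Mf * (Kg * dist x y) := by
        gcongr
        exacts [hgM x hx, hfM y hy]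
    _ = ↑(Kf * Mg + Mf * Kg) * dist x y := by push_cast; ring

theorem LipschitzOnWith.inv_of_le_norm {X 𝕜 : Type*} [PseudoMetricSpace X]
    [NormedDivisionRing 𝕜] {s : Set X} {f : X → 𝕜} {K β : ℝ≥0} (hf : LipschitzOnWith K f s)
    (hβ : 0 < β) (hfβ : ∀ x ∈ s, β ≤ ‖f x‖) :
    LipschitzOnWith (K / β ^ 2) (fun x => (f x)⁻¹) s := by
  refine LipschitzOnWith.of_dist_le_mul fun x hx y hy => ?_
  have hβx := hfβ x hx
  have hβy := hfβ y hy
  have hβ' : (0 : ℝ) < β := hβ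
  rw [dist_inv_inv₀ (norm_pos_iff.mp (hβ'.trans_le hβx)) (norm_pos_iff.mp (hβ'.trans_le hβy)),
    div_le_iff₀ (mul_pos (hβ'.trans_le hβx) (hβ'.trans_le hβy))]
  calc dist (f x) (f y) ≤ K * dist x y := hf.dist_le_mul x hx y hy
    _ = ↑(K / β ^ 2) * dist x y * (β * β) := by
        push_cast; field_simp
    _ ≤ ↑(K / β ^ 2) * dist x y * (‖f x‖ * ‖f y‖) := by gcongr

theorem setLIntegral_rpow_neg_lt_top {α : Type*} [MeasurableSpace α] {μ : Measure α}
    {h : α → ℝ} {S : Set α} (hS : ∀ x ∈ S, 0 < h x ∧ h x ≤ 1) {c : ℝ≥0∞} (hc : c ≠ ∞)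
    {p β : ℝ} (hp : 0 ≤ p) (hpβ : p < β)
    (hμ : ∀ t, 0 < t → t ≤ 1 → μ (S ∩ {x | h x ≤ t}) ≤ c * ENNReal.ofReal (t ^ β)) :
    ∫⁻ x in S, ENNReal.ofReal (h x ^ (-p)) ∂μ < ∞ := by
  set r : ℝ := (2⁻¹ : ℝ) ^ (β - p)
  have hr : ENNReal.ofReal r < 1 :=
    ENNReal.ofReal_lt_one.mpr (Real.rpow_lt_one (by norm_num) (by norm_num) (by linarith))
  set slab : ℕ → Set α := fun k => S ∩ {x | (2⁻¹ : ℝ) ^ (k + 1) < h x ∧ h x ≤ 2⁻¹ ^ k}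
  have hcover : S ⊆ ⋃ k, slab k := fun x hx => by
    obtain ⟨k, hk⟩ := exists_nat_pow_near_of_lt_one (hS x hx).1 (hS x hx).2
      (by norm_num : (0 : ℝ) < 2⁻¹) (by norm_num)
    exact mem_iUnion.mpr ⟨k, hx, hk⟩
  have hslab (k : ℕ) : ∫⁻ x in slab k, ENNReal.ofReal (h x ^ (-p)) ∂μ
      ≤ c * ENNReal.ofReal (2 ^ p) * ENNReal.ofReal r ^ k := by
    have ht : (0 : ℝ) < 2⁻¹ ^ k := by positivity
    have hbound (x : α) (hx : x ∈ slab k) :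
        ENNReal.ofReal (h x ^ (-p)) ≤ ENNReal.ofReal (((2⁻¹ : ℝ) ^ (k + 1)) ^ (-p)) :=
      ENNReal.ofReal_le_ofReal
        (Real.rpow_le_rpow_of_nonpos (by positivity) hx.2.1.le (by linarith))
    have hvol : μ (slab k) ≤ c * ENNReal.ofReal (((2⁻¹ : ℝ) ^ k) ^ β) :=
      (measure_mono fun x (hx : x ∈ slab k) => (⟨hx.1, hx.2.2⟩ : x ∈ S ∩ {x | h x ≤ 2⁻¹ ^ k})).trans
        (hμ _ ht (pow_le_one₀ (by norm_num) (by norm_num)))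
    have hpow : ((2⁻¹ : ℝ) ^ (k + 1)) ^ (-p) * ((2⁻¹ : ℝ) ^ k) ^ β = 2 ^ p * r ^ k := by
      have h2 : (2⁻¹ : ℝ) ^ (-p) = 2 ^ p := by
        rw [Real.inv_rpow (by norm_num), Real.rpow_neg (by norm_num), inv_inv]
      rw [pow_succ, Real.mul_rpow ht.le (by norm_num), h2, Real.rpow_pow_comm (by norm_num),
        mul_right_comm, ← Real.rpow_add ht, mul_comm, neg_add_eq_sub]
    calc ∫⁻ x in slab k, ENNReal.ofReal (h x ^ (-p)) ∂μ
        ≤ ∫⁻ _ in slab k, ENNReal.ofReal (((2⁻¹ : ℝ) ^ (k + 1)) ^ (-p)) ∂μ :=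
          setLIntegral_mono measurable_const hbound
      _ = ENNReal.ofReal (((2⁻¹ : ℝ) ^ (k + 1)) ^ (-p)) * μ (slab k) := setLIntegral_const _ _
      _ ≤ ENNReal.ofReal (((2⁻¹ : ℝ) ^ (k + 1)) ^ (-p))
            * (c * ENNReal.ofReal (((2⁻¹ : ℝ) ^ k) ^ β)) := by
          gcongr
      _ = c * ENNReal.ofReal (2 ^ p) * ENNReal.ofReal r ^ k := by
          rw [mul_left_comm, ← ENNReal.ofReal_mul (by positivity), hpow,
            ENNReal.ofReal_mul (by positivity), ENNReal.ofReal_pow (by positivity), mul_assoc]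
  calc ∫⁻ x in S, ENNReal.ofReal (h x ^ (-p)) ∂μ
      ≤ ∫⁻ x in ⋃ k, slab k, ENNReal.ofReal (h x ^ (-p)) ∂μ := lintegral_mono_set hcover
    _ ≤ ∑' k, ∫⁻ x in slab k, ENNReal.ofReal (h x ^ (-p)) ∂μ := lintegral_iUnion_le _ _
    _ ≤ ∑' k, c * ENNReal.ofReal (2 ^ p) * ENNReal.ofReal r ^ k := ENNReal.tsum_le_tsum hslab
    _ = c * ENNReal.ofReal (2 ^ p) * (1 - ENNReal.ofReal r)⁻¹ := by
        rw [ENNReal.tsum_mul_left, ENNReal.tsum_geometric]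
    _ < ∞ := ENNReal.mul_lt_top (ENNReal.mul_lt_top hc.lt_top ENNReal.ofReal_lt_top)
        (ENNReal.inv_lt_top.mpr (tsub_pos_of_lt hr))

theorem EuclideanSpace.volume_setOf_forall_mem {ι : Type*} [Fintype ι] (s : ι → Set ℝ) :
    volume {x : EuclideanSpace ℝ ι | ∀ i, x i ∈ s i} = ∏ i, volume (s i) := by
  rw [← volume_pi_pi,
    ← (EuclideanSpace.volume_preserving_symm_measurableEquiv_toLp ι).measure_preimage_equiv]
  congr 1
  ext x
  simp

theorem Real.volume_setOf_abs_mem_Icc_le {a b : ℝ} (hab : a ≤ b) :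
    volume {y : ℝ | |y| ∈ Icc a b} ≤ ENNReal.ofReal (2 * (b - a)) := by
  have hsub : {y : ℝ | |y| ∈ Icc a b} ⊆ Icc (-b) (-a) ∪ Icc a b := fun y ⟨h1, h2⟩ => by
    rcases le_total 0 y with hy | hy
    · rw [abs_of_nonneg hy] at h1 h2; exact Or.inr ⟨h1, h2⟩
    · rw [abs_of_nonpos hy] at h1 h2; exact Or.inl ⟨by linarith, by linarith⟩
  calc volume {y : ℝ | |y| ∈ Icc a b} ≤ volume (Icc (-b) (-a)) + volume (Icc a b) :=
        (measure_mono hsub).trans (measure_union_le _ _)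
    _ = ENNReal.ofReal (2 * (b - a)) := by
        rw [Real.volume_Icc, Real.volume_Icc, ← ENNReal.ofReal_add (by linarith) (by linarith)]
        ring_nf

theorem frob_matOf_le (f : E3 →L[ℝ] E3) : frob (matOf f) ≤ 3 * ‖f‖ := by
  have hentry (i j : Fin 3) : matOf f i j ^ 2 ≤ ‖f‖ ^ 2 := by
    have : ‖matOf f i j‖ ≤ ‖f‖ :=
      calc ‖matOf f i j‖ ≤ ‖f (EuclideanSpace.single j 1)‖ := PiLp.norm_apply_le _ i
        _ ≤ ‖f‖ * ‖EuclideanSpace.single j (1 : ℝ)‖ := f.le_opNorm _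
        _ = ‖f‖ := by simp
    simpa using sq_le_sq' (abs_le.mp this).1 (abs_le.mp this).2
  calc frob (matOf f) ≤ √((3 * ‖f‖) ^ 2) := by
        refine Real.sqrt_le_sqrt ?_
        simp only [Fin.sum_univ_three]
        linarith [hentry 0 0, hentry 0 1, hentry 0 2, hentry 1 0, hentry 1 1, hentry 1 2,
          hentry 2 0, hentry 2 1, hentry 2 2]
    _ = 3 * ‖f‖ := Real.sqrt_sq (by positivity)

theorem isOpen_Pyr1 (δ : ℝ) : IsOpen (Pyr1 δ) := by
  simp only [Pyr1, ofPred_and]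
  refine (isOpen_lt ?_ ?_).inter
    ((isOpen_lt ?_ ?_).inter ((isOpen_lt ?_ ?_).inter (isOpen_lt ?_ ?_))) <;> fun_prop

def horizNorm (x : E3) : ℝ := max |x 0| |x 1|

/-- `0` on the lateral faces of `C¹_1`, `1` on those of `C²_1`, affine in `horizNorm` at fixed
height. -/
def transitionRatio (x : E3) : ℝ := (2 * horizNorm x + 2 * x 2 - 1) / x 2

def pyrCutoff (x : E3) : ℝ := max 0 (min 1 (transitionRatio x))

def pyrMap (L : E3 →L[ℝ] E3) (x : E3) : E3 := pyrCutoff x • L x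

theorem transitionRatio_lt_iff {x : E3} (hx : 0 < x 2) (c : ℝ) :
    transitionRatio x < c ↔ |x 0| < (1 - (2 - c) * x 2) / 2 ∧ |x 1| < (1 - (2 - c) * x 2) / 2 := by
  rw [transitionRatio, div_lt_iff₀ hx, ← max_lt_iff, horizNorm]
  constructor <;> intro <;> linarith

theorem mem_Pyr1_one_iff {x : E3} : x ∈ Pyr1 1 ↔ 0 < x 2 ∧ transitionRatio x < 0 := by
  constructor
  · rintro ⟨hx, -, h0, h1⟩
    exact ⟨hx, (transitionRatio_lt_iff hx 0).2 ⟨by linarith, by linarith⟩⟩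
  · rintro ⟨hx, hr⟩
    obtain ⟨h0, h1⟩ := (transitionRatio_lt_iff hx 0).1 hr
    exact ⟨hx, by linarith [abs_nonneg (x 0)], by linarith, by linarith⟩

theorem mem_Pyr2_one_iff {x : E3} : x ∈ Pyr2 1 ↔ 0 < x 2 ∧ transitionRatio x < 1 := by
  constructor
  · rintro ⟨hx, -, h0, h1⟩
    exact ⟨hx, (transitionRatio_lt_iff hx 1).2 ⟨by linarith, by linarith⟩⟩
  · rintro ⟨hx, hr⟩
    obtain ⟨h0, h1⟩ := (transitionRatio_lt_iff hx 1).1 hr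
    exact ⟨hx, by linarith [abs_nonneg (x 0)], by linarith, by linarith⟩

theorem pyrCutoff_of_nonpos {x : E3} (h : transitionRatio x ≤ 0) : pyrCutoff x = 0 :=
  max_eq_left (min_le_of_right_le h)

theorem pyrCutoff_of_one_le {x : E3} (h : 1 ≤ transitionRatio x) : pyrCutoff x = 1 := by
  rw [pyrCutoff, min_eq_left h, max_eq_right zero_le_one]

theorem abs_pyrCutoff_le_one (x : E3) : |pyrCutoff x| ≤ 1 := by
  rw [abs_of_nonneg (le_max_left _ _)]
  exact max_le zero_le_one (min_le_left _ _)

theorem half_lt_apply_two_of_mem_ball {x y : E3} (hy : y ∈ Metric.ball x (x 2 / 2)) :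
    x 2 / 2 < y 2 := by
  have := (Real.dist_eq _ _ ▸ PiLp.dist_apply_le y x 2).trans_lt (Metric.mem_ball.mp hy)
  linarith [(abs_lt.mp this).1]

theorem lipschitzWith_horizNorm : LipschitzWith 1 horizNorm :=
  LipschitzWith.of_dist_le_mul fun x y => by
    rw [NNReal.coe_one, one_mul, Real.dist_eq]
    refine (abs_max_sub_max_le_max _ _ _ _).trans (max_le ?_ ?_) <;>
      exact (abs_abs_sub_abs_le_abs_sub _ _).trans
        (by simpa [Real.dist_eq] using PiLp.dist_apply_le x y _)

theorem lipschitzWith_transitionRatio_numerator :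
    LipschitzWith 4 fun y : E3 => 2 * horizNorm y + 2 * y 2 - 1 :=
  LipschitzWith.of_dist_le_mul fun y z => by
    have h0 := lipschitzWith_horizNorm.dist_le_mul y z
    have h2 := PiLp.dist_apply_le y z 2
    simp only [Real.dist_eq, NNReal.coe_one, one_mul] at h0 h2 ⊢
    calc |2 * horizNorm y + 2 * y 2 - 1 - (2 * horizNorm z + 2 * z 2 - 1)|
        = |2 * (horizNorm y - horizNorm z) + 2 * (y 2 - z 2)| := by ring_nf
      _ ≤ 2 * |horizNorm y - horizNorm z| + 2 * |y 2 - z 2| := by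
          refine (abs_add_le _ _).trans ?_; simp [abs_mul]
      _ ≤ ↑(4 : ℝ≥0) * dist y z := by push_cast; linarith

theorem lipschitzOnWith_inv_apply_two {x : E3} (hx : 0 < x 2) :
    LipschitzOnWith (1 / Real.toNNReal (x 2 / 2) ^ 2) (fun y : E3 => (y 2)⁻¹)
      (Metric.ball x (x 2 / 2)) := by
  refine LipschitzOnWith.inv_of_le_norm ?_ (by simpa using hx) fun y hy => ?_
  · exact (LipschitzWith.of_dist_le_mul fun y z => by
      simpa using PiLp.dist_apply_le y z 2).lipschitzOnWith
  · rw [Real.coe_toNNReal _ (by positivity), Real.norm_eq_abs]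
    exact (half_lt_apply_two_of_mem_ball hy).le.trans (le_abs_self _)

theorem lipschitzOnWith_transitionRatio {x : E3} (hx : 0 < x 2) :
    LipschitzOnWith (Real.toNNReal ((16 + 4 * |transitionRatio x|) / x 2)) transitionRatio
      (Metric.ball x (x 2 / 2)) := by
  set n : E3 → ℝ := fun y => 2 * horizNorm y + 2 * y 2 - 1
  have hn_bound (y : E3) (hy : y ∈ Metric.ball x (x 2 / 2)) :
      |n y| ≤ (|transitionRatio x| + 2) * x 2 := by
    have hnx : |n x| = |transitionRatio x| * x 2 := by
      rw [transitionRatio, abs_div, abs_of_pos hx, div_mul_cancel₀ _ hx.ne']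
    have hny := lipschitzWith_transitionRatio_numerator.dist_le_mul y x
    rw [Real.dist_eq] at hny
    push_cast at hny
    linarith [abs_sub_abs_le_abs_sub (n y) (n x), Metric.mem_ball.mp hy]
  have hinv_bound (y : E3) (hy : y ∈ Metric.ball x (x 2 / 2)) : ‖(y 2)⁻¹‖ ≤ 2 / x 2 := by
    have hy2 := half_lt_apply_two_of_mem_ball hy
    rw [norm_inv, Real.norm_eq_abs, abs_of_pos (by linarith), inv_le_comm₀ (by linarith)
      (by positivity), inv_div]
    exact hy2.le
  have hratio := lipschitzWith_transitionRatio_numerator.lipschitzOnWith.smul_of_norm_le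
    (lipschitzOnWith_inv_apply_two hx)
    (Mf := Real.toNNReal ((|transitionRatio x| + 2) * x 2)) (Mg := Real.toNNReal (2 / x 2))
    (fun y hy => by rw [Real.coe_toNNReal _ (by positivity), Real.norm_eq_abs]; exact hn_bound y hy)
    (fun y hy => by rw [Real.coe_toNNReal _ (by positivity)]; exact hinv_bound y hy)
  rw [show (fun y => n y • (y 2)⁻¹) = transitionRatio from
    funext fun y => (div_eq_mul_inv _ _).symm] at hratio
  refine hratio.weaken (le_of_eq ?_)
  rw [← NNReal.coe_inj]
  push_cast
  rw [Real.coe_toNNReal _ (by positivity), Real.coe_toNNReal _ (by positivity),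
    Real.coe_toNNReal _ (by positivity), Real.coe_toNNReal _ (by positivity)]
  field_simp
  ring

theorem lipschitzOnWith_pyrMap (L : E3 →L[ℝ] E3) {x : E3} (hx : 0 < x 2) :
    LipschitzOnWith
      (Real.toNNReal ((16 + 4 * |transitionRatio x|) / x 2 * (‖x‖ + x 2 / 2) * ‖L‖ + ‖L‖))
      (pyrMap L) (Metric.ball x (x 2 / 2)) := by
  have hcut : LipschitzOnWith (1 * Real.toNNReal ((16 + 4 * |transitionRatio x|) / x 2)) pyrCutoff
      (Metric.ball x (x 2 / 2)) :=
    ((LipschitzWith.id.const_min 1).const_max 0).comp_lipschitzOnWith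
      (lipschitzOnWith_transitionRatio hx)
  have hmap := hcut.smul_of_norm_le L.lipschitz.lipschitzOnWith (Mf := 1)
    (Mg := Real.toNNReal (‖L‖ * (‖x‖ + x 2 / 2)))
    (fun y _ => by simpa using abs_pyrCutoff_le_one y)
    (fun y hy => by
      rw [Real.coe_toNNReal _ (by positivity)]
      refine (L.le_opNorm y).trans (mul_le_mul_of_nonneg_left ?_ (norm_nonneg L))
      have := norm_le_norm_add_norm_sub' y x
      rw [← dist_eq_norm] at this
      linarith [Metric.mem_ball.mp hy])
  refine hmap.weaken (le_of_eq ?_)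
  rw [← NNReal.coe_inj]
  push_cast
  rw [Real.coe_toNNReal _ (by positivity), Real.coe_toNNReal _ (by positivity),
    Real.coe_toNNReal _ (by positivity)]
  ring

theorem locLipOn_pyrMap (L : E3 →L[ℝ] E3) : LocLipOn H3 (pyrMap L) := fun x hx =>
  ⟨_, Metric.ball x (x 2 / 2), Metric.ball_mem_nhds x (half_pos hx),
    fun _ hy => (half_pos hx).trans (half_lt_apply_two_of_mem_ball hy), lipschitzOnWith_pyrMap L hx⟩

theorem norm_le_two_of_mem_Pyr2 {x : E3} (hx : x ∈ Pyr2 1) : ‖x‖ ≤ 2 := by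
  obtain ⟨h2, h2', h0, h1⟩ := hx
  have hsq : ‖x‖ ^ 2 ≤ 2 ^ 2 := by
    rw [EuclideanSpace.norm_sq_eq, Fin.sum_univ_three]
    simp only [Real.norm_eq_abs, sq_abs]
    nlinarith [abs_nonneg (x 0), abs_nonneg (x 1), sq_abs (x 0), sq_abs (x 1)]
  exact (pow_le_pow_iff_left₀ (norm_nonneg x) (by norm_num) (by norm_num)).mp hsq

theorem norm_fderiv_pyrMap_le (L : E3 →L[ℝ] E3) {x : E3} (hx : x ∈ Pyr2 1)
    (hr : 0 ≤ transitionRatio x) : ‖fderiv ℝ (pyrMap L) x‖ ≤ 51 * ‖L‖ / x 2 := by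
  obtain ⟨hx2, hr1⟩ := mem_Pyr2_one_iff.mp hx
  have hlip := norm_fderiv_le_of_lipschitzOn ℝ (Metric.ball_mem_nhds x (half_pos hx2))
    (lipschitzOnWith_pyrMap L hx2)
  rw [Real.coe_toNNReal _ (by positivity), abs_of_nonneg hr] at hlip
  refine hlip.trans ?_
  have hn := norm_le_two_of_mem_Pyr2 hx
  have hx1 : x 2 < 1 := hx.2.1
  rw [div_mul_eq_mul_div, div_mul_eq_mul_div, div_add' _ _ _ hx2.ne',
    div_le_div_iff_of_pos_right hx2]
  have hL := norm_nonneg L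
  have : (16 + 4 * transitionRatio x) * (‖x‖ + x 2 / 2) ≤ 50 := by nlinarith
  nlinarith

theorem fderiv_pyrMap_of_mem_Pyr1 (L : E3 →L[ℝ] E3) {x : E3} (hx : x ∈ Pyr1 1) :
    fderiv ℝ (pyrMap L) x = 0 := by
  have hzero : pyrMap L =ᶠ[nhds x] fun _ => 0 :=
    Filter.eventually_of_mem ((isOpen_Pyr1 1).mem_nhds hx) fun y hy => by
      rw [pyrMap, pyrCutoff_of_nonpos (mem_Pyr1_one_iff.mp hy).2.le, zero_smul]
  rw [hzero.fderiv_eq, fderiv_const_apply]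

theorem pyrAdm_pyrMap (A : Mat3) : PyrAdm 1 A (pyrMap (Matrix.toEuclideanCLM (𝕜 := ℝ) A)) := by
  refine ⟨locLipOn_pyrMap _, fun x hx => ?_, fun x hx => ?_⟩
  · rw [pyrMap, pyrCutoff_of_nonpos (mem_Pyr1_one_iff.mp hx.1).2.le, zero_smul]
  · have hr : 1 ≤ transitionRatio x := not_lt.mp fun h => hx.2 (mem_Pyr2_one_iff.mpr ⟨hx.1, h⟩)
    rw [pyrMap, pyrCutoff_of_one_le hr, one_smul]
    rfl

theorem volume_transition_le {t : ℝ} (ht : 0 ≤ t) :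
    volume (Pyr2 1 ∩ {x | 0 ≤ transitionRatio x} ∩ {x | x 2 ≤ t}) ≤ 4 * ENNReal.ofReal (t ^ 2) := by
  set U : Set ℝ := {y | |y| ∈ Icc (1 / 2 - t) (1 / 2)}
  set I : Set ℝ := Icc (-1 / 2) (1 / 2)
  set J : Set ℝ := Icc 0 t
  have hcover : Pyr2 1 ∩ {x | 0 ≤ transitionRatio x} ∩ {x | x 2 ≤ t} ⊆
      {x | ∀ i, x i ∈ ![U, I, J] i} ∪ {x | ∀ i, x i ∈ ![I, U, J] i} := by
    rintro x ⟨⟨⟨h2, -, h0, h1⟩, hr : 0 ≤ transitionRatio x⟩, hxt : x 2 ≤ t⟩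
    rw [transitionRatio, le_div_iff₀ h2, zero_mul, horizNorm] at hr
    have h0' := abs_lt.mp h0
    have h1' := abs_lt.mp h1
    rcases le_max_iff.mp (show 1 / 2 - t ≤ max |x 0| |x 1| by linarith) with h | h
    · refine Or.inl fun i => ?_
      fin_cases i <;> simp [U, I, J] <;> constructor <;> linarith
    · refine Or.inr fun i => ?_
      fin_cases i <;> simp [U, I, J] <;> constructor <;> linarith
  have hU : volume U ≤ ENNReal.ofReal (2 * t) :=
    (Real.volume_setOf_abs_mem_Icc_le (by linarith)).trans_eq (by ring_nf)
  have hI : volume I = ENNReal.ofReal 1 := by rw [Real.volume_Icc]; norm_num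
  have hJ : volume J = ENNReal.ofReal t := by rw [Real.volume_Icc, sub_zero]
  have hbox : volume U * volume I * volume J ≤ ENNReal.ofReal (2 * t ^ 2) := by
    calc volume U * volume I * volume J
        ≤ ENNReal.ofReal (2 * t) * ENNReal.ofReal 1 * ENNReal.ofReal t := by
          rw [hI, hJ]; gcongr
      _ = ENNReal.ofReal (2 * t ^ 2) := by
          rw [← ENNReal.ofReal_mul (by positivity), ← ENNReal.ofReal_mul (by positivity)]
          ring_nf
  calc volume (Pyr2 1 ∩ {x | 0 ≤ transitionRatio x} ∩ {x | x 2 ≤ t})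
      ≤ volume {x : E3 | ∀ i, x i ∈ ![U, I, J] i} + volume {x : E3 | ∀ i, x i ∈ ![I, U, J] i} :=
        (measure_mono hcover).trans (measure_union_le _ _)
    _ ≤ ENNReal.ofReal (2 * t ^ 2) + ENNReal.ofReal (2 * t ^ 2) := by
        simp only [EuclideanSpace.volume_setOf_forall_mem, Fin.prod_univ_three]
        gcongr
        · simpa using hbox
        · simpa [mul_comm (volume I)] using hbox
    _ = 4 * ENNReal.ofReal (t ^ 2) := by
        rw [← ENNReal.ofReal_add (by positivity) (by positivity), ← ENNReal.ofReal_ofNat 4,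
          ← ENNReal.ofReal_mul (by norm_num)]
        ring_nf

theorem frob_matOf_fderiv_pyrMap_le (L : E3 →L[ℝ] E3) {x : E3} (hx : x ∈ Pyr2 1)
    (hr : 0 ≤ transitionRatio x) : frob (matOf (fderiv ℝ (pyrMap L) x)) ≤ 153 * ‖L‖ / x 2 :=
  (frob_matOf_le _).trans
    ((mul_le_mul_of_nonneg_left (norm_fderiv_pyrMap_le L hx hr) (by norm_num)).trans_eq (by ring))

theorem setLIntegral_transition_energy_pyrMap_lt_top (L : E3 →L[ℝ] E3) {p : ℝ} (hp : 0 ≤ p)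
    (hp2 : p < 2) :
    ∫⁻ x in Pyr2 1 ∩ {x | 0 ≤ transitionRatio x},
      ENNReal.ofReal (frob (matOf (fderiv ℝ (pyrMap L) x)) ^ p) < ∞ := by
  set T := Pyr2 1 ∩ {x | 0 ≤ transitionRatio x}
  have hbound (x : E3) (hx : x ∈ T) :
      ENNReal.ofReal (frob (matOf (fderiv ℝ (pyrMap L) x)) ^ p)
        ≤ ENNReal.ofReal ((153 * ‖L‖) ^ p) * ENNReal.ofReal (x 2 ^ (-p)) := by
    have hx2 : 0 < x 2 := hx.1.1
    rw [← ENNReal.ofReal_mul (by positivity), Real.rpow_neg hx2.le, ← div_eq_mul_inv,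
      ← Real.div_rpow (by positivity) hx2.le]
    exact ENNReal.ofReal_le_ofReal (Real.rpow_le_rpow (Real.sqrt_nonneg _)
      (frob_matOf_fderiv_pyrMap_le L hx.1 hx.2) hp)
  have hT : ∫⁻ x in T, ENNReal.ofReal (x 2 ^ (-p)) < ∞ :=
    setLIntegral_rpow_neg_lt_top (fun x hx => ⟨hx.1.1, hx.1.2.1.le⟩) ENNReal.ofNat_ne_top hp hp2
      fun t ht _ => by rw [Real.rpow_two]; exact volume_transition_le ht.le
  calc _ ≤ ∫⁻ x in T, ENNReal.ofReal ((153 * ‖L‖) ^ p) * ENNReal.ofReal (x 2 ^ (-p)) :=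
        setLIntegral_mono (by fun_prop) hbound
    _ = ENNReal.ofReal ((153 * ‖L‖) ^ p) * ∫⁻ x in T, ENNReal.ofReal (x 2 ^ (-p)) :=
        lintegral_const_mul' _ _ ENNReal.ofReal_ne_top
    _ < ∞ := ENNReal.mul_lt_top ENNReal.ofReal_lt_top hT

/-- for `1 < p < 2` there is an admissible map for the unit double-pyramid
problem with finite `p`-energy. -/
theorem pyramid_finite_energy (p : ℝ) (hp1 : 1 < p) (hp2 : p < 2) (A : Mat3) :
    ∃ v : E3 → E3, PyrAdm 1 A v ∧
      (∫⁻ x in Pyr2 1 ∩ H3, ENNReal.ofReal (frob (matOf (fderiv ℝ v x)) ^ p)) < ⊤ := by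
  set L := Matrix.toEuclideanCLM (𝕜 := ℝ) A
  refine ⟨pyrMap L, pyrAdm_pyrMap A, ?_⟩
  set f : E3 → ℝ≥0∞ := fun x => ENNReal.ofReal (frob (matOf (fderiv ℝ (pyrMap L) x)) ^ p)
  set T := Pyr2 1 ∩ {x | 0 ≤ transitionRatio x}
  have hPyr1 (x : E3) (hx : x ∈ (Pyr2 1 ∩ H3) \ T) : f x ≤ 0 := by
    have hx1 : x ∈ Pyr1 1 := mem_Pyr1_one_iff.mpr ⟨hx.1.2, not_le.mp fun h => hx.2 ⟨hx.1.1, h⟩⟩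
    simp [f, fderiv_pyrMap_of_mem_Pyr1 L hx1, matOf, frob, Real.zero_rpow (by linarith : p ≠ 0)]
  calc ∫⁻ x in Pyr2 1 ∩ H3, f x ≤ (∫⁻ x in T, f x) + ∫⁻ x in (Pyr2 1 ∩ H3) \ T, f x :=
        (lintegral_mono_set (sdiff_subset_iff.mp subset_rfl)).trans (lintegral_union_le _ _ _)
    _ ≤ (∫⁻ x in T, f x) + ∫⁻ _ in (Pyr2 1 ∩ H3) \ T, 0 :=
        add_le_add le_rfl (setLIntegral_mono measurable_const hPyr1)
    _ < ⊤ := by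
        rw [lintegral_zero, add_zero]
        exact setLIntegral_transition_energy_pyrMap_lt_top L (by linarith) hp2
end
end

section
/- Let 1 < p < 2 and A ∈ ℝ^{3×3} with A ≠ 0. With C¹_1 and C²_1 the open pyramids with common base square (−1/2,1/2)² × {0} and apexes (0,0,1/2) and (0,0,1) respectively, and ℝ³₊ = {x ∈ ℝ³ : x₃ > 0}, the infimum m_{1,p,A} := inf { ∫_{C²_1 ∩ ℝ³₊} ‖Dv(x)‖^p dx : v : ℝ³₊ → ℝ³ locally Lipschitz, v = 0 on C¹_1 ∩ ℝ³₊, v(x) = Ax on ℝ³₊ ∖ C²_1 } is strictly positive. -/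
open MeasureTheory Filter Set Matrix
open scoped ENNReal NNReal

noncomputable section

/-!
Fix a vertical line `t ↦ (w₀, w₁, t)` that meets `C¹_1` and leaves `C²_1` through a lateral face.
An admissible `v` vanishes on it inside `C¹_1` and equals `A x` at the exit point. Along the
line `v` is Lipschitz, so the fundamental theorem of calculus bounds `‖A x‖` at the exit point by
`∫ ‖∂₃v‖ dt`, and Jensen (the segment has length `< 1`) bounds `‖A x‖ ^ p` by `∫ ‖∂₃v‖ ^ p dt`.
As `A ≠ 0`, `‖A x‖` is bounded below at the exit points of an open set of lines; integrating over
them (Fubini, with Rademacher's theorem identifying `∂₃v` with `Dv e₃` almost everywhere) gives a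
positive lower bound for the energy of every admissible `v`.
-/

theorem LipschitzOnWith.enorm_sub_le_lintegral_enorm_deriv {F : Type*} [NormedAddCommGroup F]
    [NormedSpace ℝ F] [FiniteDimensional ℝ F] {g : ℝ → F} {K : ℝ≥0} {a b : ℝ}
    (hab : a ≤ b) (hg : LipschitzOnWith K g (Icc a b)) :
    ‖g b - g a‖ₑ ≤ ∫⁻ t in Ioo a b, ‖deriv g t‖ₑ := by
  obtain ⟨φ, hφ_norm, hφ⟩ := exists_dual_vector'' ℝ (g b - g a)
  have hφg : LipschitzOnWith (‖φ‖₊ * K) (φ ∘ g) (uIcc a b) := by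
    rw [uIcc_of_le hab]
    exact φ.lipschitz.comp_lipschitzOnWith hg
  have hderiv : ∀ᵐ t, t ∈ Ioo a b → ‖deriv (φ ∘ g) t‖ₑ ≤ ‖deriv g t‖ₑ := by
    filter_upwards [hg.ae_differentiableWithinAt_of_mem] with t hdiff ht
    have hg' := ((hdiff (Ioo_subset_Icc_self ht)).differentiableAt
      (Icc_mem_nhds ht.1 ht.2)).hasDerivAt
    rw [(φ.hasFDerivAt.comp_hasDerivAt t hg').deriv, ← ofReal_norm, ← ofReal_norm]
    exact ENNReal.ofReal_le_ofReal ((φ.le_opNorm _).trans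
      (mul_le_of_le_one_left (norm_nonneg _) hφ_norm))
  calc ‖g b - g a‖ₑ = ‖∫ t in Ioo a b, deriv (φ ∘ g) t‖ₑ := by
        rw [← integral_Ioc_eq_integral_Ioo, ← intervalIntegral.integral_of_le hab,
          hφg.absolutelyContinuousOnInterval.integral_deriv_eq_sub]
        simp [← map_sub, hφ]
    _ ≤ ∫⁻ t in Ioo a b, ‖deriv (φ ∘ g) t‖ₑ := enorm_integral_le_lintegral_enorm _
    _ ≤ ∫⁻ t in Ioo a b, ‖deriv g t‖ₑ :=
        lintegral_mono_ae ((ae_restrict_iff' measurableSet_Ioo).2 hderiv)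

theorem LocallyLipschitzOn.ae_differentiableAt {E F : Type*} [NormedAddCommGroup E]
    [NormedSpace ℝ E] [FiniteDimensional ℝ E] [MeasurableSpace E] [BorelSpace E]
    [NormedAddCommGroup F] [NormedSpace ℝ F] [FiniteDimensional ℝ F]
    {μ : Measure E} [μ.IsAddHaarMeasure] {s : Set E} {f : E → F}
    (hs : IsOpen s) (hf : LocallyLipschitzOn s f) :
    ∀ᵐ x ∂μ, x ∈ s → DifferentiableAt ℝ f x := by
  rw [ae_iff]
  refine measure_null_of_locally_null _ fun x hx => ?_
  simp only [Classical.not_imp, mem_ofPred_eq] at hx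
  obtain ⟨K, t, ht, hlip⟩ := hf hx.1
  rw [hs.nhdsWithin_eq hx.1] at ht
  refine ⟨_, inter_mem_nhdsWithin _ (interior_mem_nhds.2 ht), ?_⟩
  rw [← nonpos_iff_eq_zero, ← ae_iff.1 (hlip.ae_differentiableWithinAt_of_mem (μ := μ))]
  refine measure_mono fun y ⟨hy, hyt⟩ => ?_
  simp only [Classical.not_imp, mem_ofPred_eq] at hy ⊢
  exact ⟨interior_subset hyt,
    fun hd => hy.2 (hd.differentiableAt (mem_interior_iff_mem_nhds.1 hyt))⟩

theorem rpow_lintegral_le_lintegral_rpow {α : Type*} [MeasurableSpace α] {μ : Measure α}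
    (hμ : μ univ ≤ 1) {p : ℝ} (hp : 1 < p) {f : α → ℝ≥0∞} (hf : AEMeasurable f μ) :
    (∫⁻ a, f a ∂μ) ^ p ≤ ∫⁻ a, f a ^ p ∂μ := by
  have hpq := Real.HolderConjugate.conjExponent hp
  have holder := ENNReal.lintegral_mul_le_Lp_mul_Lq μ hpq hf aemeasurable_const (g := 1)
  simp only [Pi.mul_apply, Pi.one_apply, mul_one, ENNReal.one_rpow, lintegral_const,
    one_mul] at holder
  calc (∫⁻ a, f a ∂μ) ^ p ≤ ((∫⁻ a, f a ^ p ∂μ) ^ (1 / p)) ^ p := by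
        gcongr
        refine holder.trans (mul_le_of_le_one_right' ?_)
        exact ENNReal.rpow_le_one hμ (by have := hpq.symm.pos; positivity)
    _ = ∫⁻ a, f a ^ p ∂μ := by
        rw [← ENNReal.rpow_mul, one_div_mul_cancel (by linarith), ENNReal.rpow_one]

section VerticalLines

local notation "e₃" => (EuclideanSpace.single (2 : Fin 3) (1 : ℝ) : E3)

def vertPt (w : Fin 2 → ℝ) (t : ℝ) : E3 := !₂[w 0, w 1, t]

@[simp] lemma vertPt_apply_zero (w : Fin 2 → ℝ) (t : ℝ) : vertPt w t 0 = w 0 := rfl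
@[simp] lemma vertPt_apply_one (w : Fin 2 → ℝ) (t : ℝ) : vertPt w t 1 = w 1 := rfl
@[simp] lemma vertPt_apply_two (w : Fin 2 → ℝ) (t : ℝ) : vertPt w t 2 = t := rfl

lemma vertPt_eq_add_smul (w : Fin 2 → ℝ) (t : ℝ) : vertPt w t = vertPt w 0 + t • e₃ := by
  ext i; fin_cases i <;> simp

lemma hasDerivAt_vertPt (w : Fin 2 → ℝ) (t : ℝ) : HasDerivAt (vertPt w) e₃ t := by
  have := ((hasDerivAt_id t).smul_const e₃).const_add (vertPt w 0)
  simpa [← vertPt_eq_add_smul] using this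

lemma lipschitzWith_vertPt (w : Fin 2 → ℝ) : LipschitzWith 1 (vertPt w) :=
  LipschitzWith.of_dist_le_mul fun s t => by
    rw [dist_eq_norm, vertPt_eq_add_smul w s, vertPt_eq_add_smul w t, add_sub_add_left_eq_sub,
      ← sub_smul, norm_smul]
    simp [Real.dist_eq]

lemma continuous_vertPt : Continuous fun z : (Fin 2 → ℝ) × ℝ => vertPt z.1 z.2 := by
  unfold vertPt; fun_prop

lemma measurePreserving_vertPt :
    MeasurePreserving (fun z : (Fin 2 → ℝ) × ℝ => vertPt z.1 z.2) := by
  have h := (PiLp.volume_preserving_toLp (Fin 3)).comp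
    ((volume_preserving_piFinSuccAbove (fun _ : Fin 3 => ℝ) 2).symm.comp
      (Measure.measurePreserving_swap (μ := (volume : Measure (Fin 2 → ℝ)))
        (ν := (volume : Measure ℝ))))
  convert h using 1
  · ext z i; fin_cases i <;> rfl
  · exact Measure.volume_eq_prod _ _

lemma isOpen_H3 : IsOpen H3 := isOpen_lt continuous_const (by fun_prop)

lemma measurableSet_Pyr2_inter_H3 : MeasurableSet (Pyr2 1 ∩ H3) := by
  unfold Pyr2 H3; measurability

-- The vertical line through `w` meets `C¹_1` at height `1/8` and leaves `C²_1` through the face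
-- `x₀ = (1 - x₂)/2` at height `1 - 2 w₀`.
def lineWindow : Set (Fin 2 → ℝ) := {w | 1/8 < w 0 ∧ w 0 < 1/4 ∧ |w 1| < 1/8}

lemma isOpen_lineWindow : IsOpen lineWindow := by
  simp only [lineWindow, ofPred_and]
  exact (isOpen_lt continuous_const (continuous_apply 0)).inter
    ((isOpen_lt (continuous_apply 0) continuous_const).inter
      (isOpen_lt (continuous_apply 1).abs continuous_const))

variable {w : Fin 2 → ℝ}

lemma vertPt_mem_Pyr1 (hw : w ∈ lineWindow) : vertPt w (1/8) ∈ Pyr1 1 ∩ H3 := by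
  obtain ⟨h₀, h₀', h₁⟩ := hw
  simp only [Pyr1, H3, mem_inter_iff, mem_ofPred_eq, vertPt_apply_zero, vertPt_apply_one,
    vertPt_apply_two, abs_of_pos (by linarith : 0 < w 0)]
  refine ⟨⟨?_, ?_, ?_, ?_⟩, ?_⟩ <;> linarith

lemma vertPt_mem_Pyr2 (hw : w ∈ lineWindow) {t : ℝ} (ht : t ∈ Ioo (1/8) (1 - 2 * w 0)) :
    vertPt w t ∈ Pyr2 1 ∩ H3 := by
  obtain ⟨h₀, h₀', h₁⟩ := hw
  obtain ⟨ht, ht'⟩ := ht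
  simp only [Pyr2, H3, mem_inter_iff, mem_ofPred_eq, vertPt_apply_zero, vertPt_apply_one,
    vertPt_apply_two, abs_of_pos (by linarith : 0 < w 0)]
  refine ⟨⟨?_, ?_, ?_, ?_⟩, ?_⟩ <;> linarith

lemma vertPt_exit_mem_H3_diff_Pyr2 (hw : w ∈ lineWindow) :
    vertPt w (1 - 2 * w 0) ∈ H3 \ Pyr2 1 := by
  obtain ⟨h₀, h₀', h₁⟩ := hw
  refine ⟨show 0 < 1 - 2 * w 0 by linarith, fun ⟨_, _, h, _⟩ => ?_⟩
  simp only [vertPt_apply_zero, vertPt_apply_two, abs_of_pos (by linarith : 0 < w 0)] at h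
  linarith

lemma LocLipOn.locallyLipschitzOn {s : Set E3} {v : E3 → E3} (hv : LocLipOn s v) :
    LocallyLipschitzOn s v := fun x hx =>
  let ⟨K, t, ht, _, hlip⟩ := hv x hx
  ⟨K, t, mem_nhdsWithin_of_mem_nhds ht, hlip⟩

lemma LocLipOn.exists_lipschitzOnWith_comp {s : Set E3} {v : E3 → E3} (hv : LocLipOn s v)
    {γ : ℝ → E3} {Kγ : ℝ≥0} (hγ : LipschitzWith Kγ γ) {a b : ℝ} (hmaps : MapsTo γ (Icc a b) s) :
    ∃ K, LipschitzOnWith K (v ∘ γ) (Icc a b) := by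
  refine LocallyLipschitzOn.exists_lipschitzOnWith_of_compact isCompact_Icc fun t ht => ?_
  obtain ⟨K, u, hu, -, hlip⟩ := hv _ (hmaps ht)
  exact ⟨K * Kγ, γ ⁻¹' u,
    mem_nhdsWithin_of_mem_nhds (hγ.continuous.continuousAt.preimage_mem_nhds hu),
    hlip.comp hγ.lipschitzOnWith (mapsTo_preimage _ _)⟩

lemma PyrAdm.enorm_exit_le_lintegral {A : Mat3} {v : E3 → E3} (hv : PyrAdm 1 A v)
    (hw : w ∈ lineWindow)
    (hdiff : ∀ᵐ t, t ∈ Ioo (1/8) (1 - 2 * w 0) → DifferentiableAt ℝ v (vertPt w t)) :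
    ‖mulVecE A (vertPt w (1 - 2 * w 0))‖ₑ
      ≤ ∫⁻ t in Ioo (1/8) (1 - 2 * w 0), ‖fderiv ℝ v (vertPt w t) e₃‖ₑ := by
  obtain ⟨hloc, hzero, hlin⟩ := hv
  have hcd : (1/8 : ℝ) ≤ 1 - 2 * w 0 := by linarith [hw.2.1]
  obtain ⟨K, hK⟩ := hloc.exists_lipschitzOnWith_comp (lipschitzWith_vertPt w)
    (a := 1/8) (b := 1 - 2 * w 0) fun t ht => show (0 : ℝ) < t by linarith [ht.1]
  have hends : v (vertPt w (1 - 2 * w 0)) - v (vertPt w (1/8))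
      = mulVecE A (vertPt w (1 - 2 * w 0)) := by
    rw [hlin _ (vertPt_exit_mem_H3_diff_Pyr2 hw), hzero _ (vertPt_mem_Pyr1 hw), sub_zero]
  rw [← hends]
  refine (hK.enorm_sub_le_lintegral_enorm_deriv hcd).trans
    (lintegral_mono_ae ((ae_restrict_iff' measurableSet_Ioo).2 ?_))
  filter_upwards [hdiff] with t hdt ht
  rw [((hdt ht).hasFDerivAt.comp_hasDerivAt t (hasDerivAt_vertPt w t)).deriv]

lemma norm_apply_single_le_frob (f : E3 →L[ℝ] E3) (j : Fin 3) :
    ‖f (EuclideanSpace.single j 1)‖ ≤ frob (matOf f) := by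
  rw [EuclideanSpace.norm_eq]
  refine Real.sqrt_le_sqrt (Finset.sum_le_sum fun i _ => ?_)
  rw [Real.norm_eq_abs, sq_abs]
  exact Finset.single_le_sum (f := fun j => (matOf f i j) ^ 2) (fun _ _ => sq_nonneg _)
    (Finset.mem_univ j)

lemma mulVecE_apply (A : Mat3) (x : E3) (i : Fin 3) :
    mulVecE A x i = A i 0 * x 0 + A i 1 * x 1 + A i 2 * x 2 := by
  simp [mulVecE, Matrix.mulVec, dotProduct, Fin.sum_univ_three]

lemma exists_mem_lineWindow_mulVecE_ne_zero {A : Mat3} (hA : A ≠ 0) :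
    ∃ w ∈ lineWindow, mulVecE A (vertPt w (1 - 2 * w 0)) ≠ 0 := by
  by_contra! hcon
  have hrow (a b : ℝ) (hw : ![a, b] ∈ lineWindow) (i : Fin 3) :
      A i 0 * a + A i 1 * b + A i 2 * (1 - 2 * a) = 0 := by
    simpa [mulVecE_apply] using congrArg (· i) (hcon _ hw)
  refine hA (Matrix.ext fun i j => ?_)
  have h₁ := hrow (3/16) 0 ⟨by norm_num, by norm_num, by norm_num⟩ i
  have h₂ := hrow (7/32) 0 ⟨by norm_num, by norm_num, by norm_num⟩ i
  have h₃ := hrow (3/16) (1/16) ⟨by norm_num, by norm_num, by norm_num [abs_of_pos]⟩ i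
  fin_cases j <;> simp <;> linarith

lemma LocLipOn.ae_ae_differentiableAt_vertPt {v : E3 → E3} (hv : LocLipOn H3 v) :
    ∀ᵐ w, ∀ᵐ t, vertPt w t ∈ H3 → DifferentiableAt ℝ v (vertPt w t) := by
  have h := measurePreserving_vertPt.quasiMeasurePreserving.ae
    (hv.locallyLipschitzOn.ae_differentiableAt isOpen_H3)
  rw [Measure.volume_eq_prod] at h
  exact Measure.ae_ae_of_ae_prod h

lemma PyrAdm.ofReal_rpow_le_lintegral_vertical {A : Mat3} {v : E3 → E3} (hv : PyrAdm 1 A v)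
    {p : ℝ} (hp : 1 < p) (hw : w ∈ lineWindow)
    (hdiff : ∀ᵐ t, vertPt w t ∈ H3 → DifferentiableAt ℝ v (vertPt w t)) :
    ENNReal.ofReal (‖mulVecE A (vertPt w (1 - 2 * w 0))‖ ^ p)
      ≤ ∫⁻ t in Ioo (1/8) (1 - 2 * w 0), ‖fderiv ℝ v (vertPt w t) e₃‖ₑ ^ p := by
  have hlen : volume (Ioo (1/8 : ℝ) (1 - 2 * w 0)) ≤ 1 := by
    rw [Real.volume_Ioo]
    exact ENNReal.ofReal_le_one.2 (by linarith [hw.1])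
  rw [← ENNReal.ofReal_rpow_of_nonneg (norm_nonneg _) (by linarith), ofReal_norm]
  calc ‖mulVecE A (vertPt w (1 - 2 * w 0))‖ₑ ^ p
      ≤ (∫⁻ t in Ioo (1/8) (1 - 2 * w 0), ‖fderiv ℝ v (vertPt w t) e₃‖ₑ) ^ p := by
        gcongr
        refine hv.enorm_exit_le_lintegral hw ?_
        filter_upwards [hdiff] with t ht htI using ht (show (0 : ℝ) < t by linarith [htI.1])
    _ ≤ ∫⁻ t in Ioo (1/8) (1 - 2 * w 0), ‖fderiv ℝ v (vertPt w t) e₃‖ₑ ^ p :=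
        rpow_lintegral_le_lintegral_rpow (by simpa using hlen) hp
          ((measurable_fderiv_apply_const ℝ v _).enorm.comp
            (lipschitzWith_vertPt w).continuous.measurable).aemeasurable

lemma setLIntegral_vertical_le_setLIntegral_Pyr2 {G : E3 → ℝ≥0∞} (hG : Measurable G)
    {W : Set (Fin 2 → ℝ)} (hW : MeasurableSet W) (hW_sub : W ⊆ lineWindow) :
    ∫⁻ w in W, ∫⁻ t in Ioo (1/8) (1 - 2 * w 0), G (vertPt w t) ≤ ∫⁻ x in Pyr2 1 ∩ H3, G x := by
  set S := (fun z : (Fin 2 → ℝ) × ℝ => vertPt z.1 z.2) ⁻¹' (Pyr2 1 ∩ H3)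
  have hS : MeasurableSet S := measurePreserving_vertPt.measurable measurableSet_Pyr2_inter_H3
  have hGS : Measurable (S.indicator fun z => G (vertPt z.1 z.2)) :=
    (hG.comp continuous_vertPt.measurable).indicator hS
  calc ∫⁻ w in W, ∫⁻ t in Ioo (1/8) (1 - 2 * w 0), G (vertPt w t)
      ≤ ∫⁻ w, ∫⁻ t, S.indicator (fun z => G (vertPt z.1 z.2)) (w, t) := by
        refine (setLIntegral_mono' hW fun w hw => ?_).trans (setLIntegral_le_lintegral _ _)
        rw [← lintegral_indicator measurableSet_Ioo]
        refine lintegral_mono fun t => ?_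
        by_cases ht : t ∈ Ioo (1/8) (1 - 2 * w 0)
        · rw [indicator_of_mem ht,
            indicator_of_mem (show (w, t) ∈ S from vertPt_mem_Pyr2 (hW_sub hw) ht)]
        · rw [indicator_of_notMem ht]
          exact zero_le
    _ = ∫⁻ z in S, G (vertPt z.1 z.2) := by
        rw [← lintegral_indicator hS, Measure.volume_eq_prod]
        exact (lintegral_prod _ hGS.aemeasurable).symm
    _ = ∫⁻ x in Pyr2 1 ∩ H3, G x :=
        measurePreserving_vertPt.setLIntegral_comp_preimage measurableSet_Pyr2_inter_H3 hG

lemma PyrAdm.ofReal_rpow_mul_volume_le {A : Mat3} {v : E3 → E3} (hv : PyrAdm 1 A v)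
    {p : ℝ} (hp : 1 < p) {W : Set (Fin 2 → ℝ)} (hW : MeasurableSet W) (hW_sub : W ⊆ lineWindow)
    {ε : ℝ} (hε : 0 ≤ ε) (hWε : ∀ w ∈ W, ε ≤ ‖mulVecE A (vertPt w (1 - 2 * w 0))‖) :
    ENNReal.ofReal (ε ^ p) * volume W
      ≤ ∫⁻ x in Pyr2 1 ∩ H3, ENNReal.ofReal (frob (matOf (fderiv ℝ v x)) ^ p) := by
  have hline : ∀ᵐ w, w ∈ W →
      ENNReal.ofReal (ε ^ p)
        ≤ ∫⁻ t in Ioo (1/8) (1 - 2 * w 0), ‖fderiv ℝ v (vertPt w t) e₃‖ₑ ^ p := by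
    filter_upwards [hv.1.ae_ae_differentiableAt_vertPt] with w hdiff hwW
    refine le_trans ?_ (hv.ofReal_rpow_le_lintegral_vertical hp (hW_sub hwW) hdiff)
    gcongr
    exact hWε w hwW
  calc ENNReal.ofReal (ε ^ p) * volume W = ∫⁻ w in W, ENNReal.ofReal (ε ^ p) :=
        (setLIntegral_const _ _).symm
    _ ≤ ∫⁻ w in W, ∫⁻ t in Ioo (1/8) (1 - 2 * w 0), ‖fderiv ℝ v (vertPt w t) e₃‖ₑ ^ p :=
        lintegral_mono_ae ((ae_restrict_iff' hW).2 hline)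
    _ ≤ ∫⁻ x in Pyr2 1 ∩ H3, ‖fderiv ℝ v x e₃‖ₑ ^ p :=
        setLIntegral_vertical_le_setLIntegral_Pyr2
          ((measurable_fderiv_apply_const ℝ v _).enorm.pow_const p) hW hW_sub
    _ ≤ ∫⁻ x in Pyr2 1 ∩ H3, ENNReal.ofReal (frob (matOf (fderiv ℝ v x)) ^ p) := by
        refine lintegral_mono fun x => ?_
        rw [← ofReal_norm, ENNReal.ofReal_rpow_of_nonneg (norm_nonneg _) (by linarith)]
        gcongr
        exact norm_apply_single_le_frob _ _

end VerticalLines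

theorem pyramid_positive_general (p : ℝ) (hp1 : 1 < p) (A : Mat3) (hA : A ≠ 0) :
    0 < mPyr 1 p A := by
  obtain ⟨w₀, hw₀, hA₀⟩ := exists_mem_lineWindow_mulVecE_ne_zero hA
  set ρ : (Fin 2 → ℝ) → ℝ := fun w => ‖mulVecE A (vertPt w (1 - 2 * w 0))‖
  have hρ : Continuous ρ := by simp only [ρ, mulVecE, vertPt]; fun_prop
  set W := lineWindow ∩ {w | ρ w₀ / 2 < ρ w}
  have hW : IsOpen W := isOpen_lineWindow.inter (isOpen_lt continuous_const hρ)
  have hW_pos : 0 < volume W :=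
    hW.measure_pos volume ⟨w₀, hw₀, half_lt_self (norm_pos_iff.2 hA₀)⟩
  have hc_pos : 0 < ENNReal.ofReal ((ρ w₀ / 2) ^ p) :=
    ENNReal.ofReal_pos.2 (Real.rpow_pos_of_pos (half_pos (norm_pos_iff.2 hA₀)) p)
  refine (ENNReal.mul_pos hc_pos.ne' hW_pos.ne').trans_le (le_sInf ?_)
  rintro _ ⟨v, hv, rfl⟩
  exact hv.ofReal_rpow_mul_volume_le hp1 hW.measurableSet inter_subset_left
    (by positivity) fun w hw => hw.2.le

/-- for `1 < p < 2` and `A ≠ 0`, the unit double-pyramid minimum `m_{1,p,A}`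
is strictly positive. -/
theorem pyramid_positive (p : ℝ) (hp1 : 1 < p) (hp2 : p < 2) (A : Mat3) (hA : A ≠ 0) :
    0 < mPyr 1 p A :=
  pyramid_positive_general p hp1 A hA
end
end
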